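/- arXiv:1902.01842 — 2 statements merged into one kernel-verified Lean document; each statement's English description precedes it below -/
import Mathlib

section
/- Under the directional compactification u_{N/2} = 1/s, u_i = x_i/s, a solution u(t) of the ODE system u_i' = N²(u_{i-1} − 2u_i + u_{i+1}) + λ e^{u_i^m} (with boundary conventions u₀ = u_N = 0) with u_{N/2}(t) > 0 corresponds, after the time rescaling dτ/dt = s^{-1} e^{1/s^m}, to a solution of the desingularized system ṡ = −e^{−1/s^m} Δ_{N/2} − λ s, ẋ_i = −x_i s^{-1} e^{−1/s^m} Δ_{N/2} − λ x_i + s^{-1} e^{−1/s^m} Δ_i + λ e^{−(1−x_i^m)/s^m}, where Δ_i = N²(x_{i−1} − 2x_i + x_{i+1}) with x_{N/2} := 1, x₀ = x_N := 0. -/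
/-! The substitution `s = 1/u_{N/2}`, `x_i = u_i s` turns the original system into
`ṡ = s⁻¹ e^{1/s^m} · F_s(s, x)` and `ẋ_i = s⁻¹ e^{1/s^m} · F_i(s, x)`, where `F` is the
desingularized vector field: the singular factor `s⁻¹ e^{1/s^m}` is exactly `dτ/dt`, so it
disappears after the change of time `t ↦ τ`, whose inverse is differentiable by the inverse
function theorem. -/

open MeasureTheory

/-- `s = 1/u_{N/2}` for the directional compactification. -/
noncomputable def sVal (N : ℕ) (u : ℝ → ℕ → ℝ) (t : ℝ) : ℝ := (u t (N / 2))⁻¹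

/-- `x_i = u_i / u_{N/2}`. -/
noncomputable def xVal (N : ℕ) (u : ℝ → ℕ → ℝ) (t : ℝ) (i : ℕ) : ℝ :=
  u t i * sVal N u t

/-- `Δ_i = N² (x_{i-1} - 2 x_i + x_{i+1})`. -/
noncomputable def ΔVal (N : ℕ) (u : ℝ → ℕ → ℝ) (t : ℝ) (i : ℕ) : ℝ :=
  (N : ℝ) ^ 2 * (xVal N u t (i - 1) - 2 * xVal N u t i + xVal N u t (i + 1))

/-- Rescaled time `τ(t)`, with `dτ/dt = s⁻¹ e^{1/s^m} = u_{N/2} e^{u_{N/2}^m}`...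
here `dτ/dt = s e^{1/s^m}` written via `u`: `τ(t) = ∫₀ᵗ (u_{N/2})⁻¹ e^{u_{N/2}^m}`. -/
noncomputable def τof (N m : ℕ) (u : ℝ → ℕ → ℝ) (t : ℝ) : ℝ :=
  ∫ σ in (0 : ℝ)..t, (u σ (N / 2))⁻¹ * Real.exp (u σ (N / 2) ^ m)

open Filter Set Topology

theorem HasDerivAt.comp_localLeftInverse {𝕜 : Type*} [NontriviallyNormedField 𝕜]
    [CompleteSpace 𝕜] {f g F : 𝕜 → 𝕜} {f' F' a : 𝕜} (hF : HasDerivAt F F' a)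
    (hf : HasStrictDerivAt f f' a) (hf' : f' ≠ 0) (hg : ∀ᶠ x in 𝓝 a, g (f x) = x) :
    HasDerivAt (fun y => F (g y)) (F' / f') (f a) := by
  rw [← hg.self_of_nhds] at hF
  rw [div_eq_mul_inv]
  exact hF.comp (f a) (hf.to_local_left_inverse hf' hg).hasDerivAt

theorem ContinuousOn.integral_hasStrictDerivAt_of_mem_Ioo {E : Type*} [NormedAddCommGroup E]
    [NormedSpace ℝ E] [CompleteSpace E] {f : ℝ → E} {a b t : ℝ} (hf : ContinuousOn f (Ico a b))
    (ht : t ∈ Ioo a b) : HasStrictDerivAt (fun x => ∫ y in a..x, f y) (f t) t := by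
  refine intervalIntegral.integral_hasStrictDerivAt_right ?_ ?_ ?_
  · rw [intervalIntegrable_iff_integrableOn_Icc_of_le ht.1.le]
    exact (hf.mono (Icc_subset_Ico_right ht.2)).integrableOn_compact isCompact_Icc
  · exact (hf.mono Ioo_subset_Ico_self).stronglyMeasurableAtFilter isOpen_Ioo t ht
  · exact hf.continuousAt (Ico_mem_nhds ht.1 ht.2)

noncomputable def discreteHeatField (N m : ℕ) (lam : ℝ) (u : ℝ → ℕ → ℝ) (t : ℝ) (i : ℕ) : ℝ :=
  (N : ℝ) ^ 2 * (u t (i - 1) - 2 * u t i + u t (i + 1)) + lam * Real.exp (u t i ^ m)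

noncomputable def timeScale (N m : ℕ) (u : ℝ → ℕ → ℝ) (t : ℝ) : ℝ :=
  (u t (N / 2))⁻¹ * Real.exp (u t (N / 2) ^ m)

section Compactification

variable {N m : ℕ} {lam : ℝ} {u : ℝ → ℕ → ℝ} {t : ℝ}

theorem continuousOn_timeScale {S : Set ℝ} (hu : ContinuousOn (fun t => u t (N / 2)) S)
    (hne : ∀ t ∈ S, u t (N / 2) ≠ 0) : ContinuousOn (timeScale N m u) S :=
  (hu.inv₀ hne).mul (Real.continuous_exp.comp_continuousOn (hu.pow m))

theorem timeScale_pos (h : 0 < u t (N / 2)) : 0 < timeScale N m u t := by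
  unfold timeScale
  positivity

theorem exp_neg_one_div_sVal_pow :
    Real.exp (-1 / sVal N u t ^ m) = (Real.exp (u t (N / 2) ^ m))⁻¹ := by
  rw [sVal, inv_pow, div_inv_eq_mul, neg_one_mul, Real.exp_neg]

theorem exp_neg_one_sub_xVal_pow_div (i : ℕ) (h : u t (N / 2) ≠ 0) :
    Real.exp (-(1 - xVal N u t i ^ m) / sVal N u t ^ m)
      = Real.exp (u t i ^ m) / Real.exp (u t (N / 2) ^ m) := by
  rw [← Real.exp_sub]
  congr 1
  simp only [xVal, sVal, mul_pow, inv_pow]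
  field_simp
  ring

theorem hasDerivAt_sVal
    (hw : HasDerivAt (fun t => u t (N / 2)) (discreteHeatField N m lam u t (N / 2)) t)
    (h : u t (N / 2) ≠ 0) :
    HasDerivAt (sVal N u)
      (timeScale N m u t *
        (-Real.exp (-1 / sVal N u t ^ m) * ΔVal N u t (N / 2) - lam * sVal N u t)) t := by
  refine (hw.inv h).congr_deriv ?_
  rw [exp_neg_one_div_sVal_pow]
  simp only [timeScale, ΔVal, xVal, sVal, discreteHeatField]
  field_simp
  ring

theorem hasDerivAt_xVal {i : ℕ}
    (hu : HasDerivAt (fun t => u t i) (discreteHeatField N m lam u t i) t)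
    (hw : HasDerivAt (fun t => u t (N / 2)) (discreteHeatField N m lam u t (N / 2)) t)
    (h : u t (N / 2) ≠ 0) :
    HasDerivAt (fun t => xVal N u t i)
      (timeScale N m u t *
        (-xVal N u t i * (sVal N u t)⁻¹ * Real.exp (-1 / sVal N u t ^ m) * ΔVal N u t (N / 2)
          - lam * xVal N u t i
          + (sVal N u t)⁻¹ * Real.exp (-1 / sVal N u t ^ m) * ΔVal N u t i
          + lam * Real.exp (-(1 - xVal N u t i ^ m) / sVal N u t ^ m))) t := by
  refine (hu.mul (hw.inv h)).congr_deriv ?_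
  rw [exp_neg_one_div_sVal_pow, exp_neg_one_sub_xVal_pow_div i h]
  simp only [Pi.inv_apply, timeScale, ΔVal, xVal, sVal, discreteHeatField]
  field_simp
  ring

end Compactification

theorem stmt13_general (N m : ℕ) (hN : 4 ≤ N)
    (lam : ℝ)
    (u : ℝ → ℕ → ℝ) (T : ℝ)
    (hpos : ∀ t ∈ Set.Ico (0 : ℝ) T, 0 < u t (N / 2))
    (hode : ∀ t ∈ Set.Ico (0 : ℝ) T, ∀ i, 1 ≤ i → i ≤ N - 1 →
      HasDerivAt (fun t' => u t' i)
        ((N : ℝ) ^ 2 * (u t (i - 1) - 2 * u t i + u t (i + 1))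
          + lam * Real.exp (u t i ^ m)) t)
    (tinv : ℝ → ℝ)
    (htinv : ∀ t ∈ Set.Ico (0 : ℝ) T, tinv (τof N m u t) = t) :
    ∀ t ∈ Set.Ioo (0 : ℝ) T,
      HasDerivAt (fun τ => sVal N u (tinv τ))
        (-Real.exp (-1 / sVal N u t ^ m) * ΔVal N u t (N / 2) - lam * sVal N u t)
        (τof N m u t) ∧
      ∀ i, 1 ≤ i → i ≤ N - 1 → i ≠ N / 2 →
        HasDerivAt (fun τ => xVal N u (tinv τ) i)
          (-xVal N u t i * (sVal N u t)⁻¹ * Real.exp (-1 / sVal N u t ^ m)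
              * ΔVal N u t (N / 2)
            - lam * xVal N u t i
            + (sVal N u t)⁻¹ * Real.exp (-1 / sVal N u t ^ m) * ΔVal N u t i
            + lam * Real.exp (-(1 - xVal N u t i ^ m) / sVal N u t ^ m))
          (τof N m u t) := by
  intro t ht
  have htI : t ∈ Ico 0 T := Ioo_subset_Ico_self ht
  have hmid : ∀ t ∈ Ico 0 T, HasDerivAt (fun t' => u t' (N / 2))
      (discreteHeatField N m lam u t (N / 2)) t :=
    fun t ht => hode t ht (N / 2) (by omega) (by omega)
  have hτ : HasStrictDerivAt (τof N m u) (timeScale N m u t) t :=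
    (continuousOn_timeScale (fun t ht => (hmid t ht).continuousAt.continuousWithinAt)
      (fun t ht => (hpos t ht).ne')).integral_hasStrictDerivAt_of_mem_Ioo ht
  have hscale : timeScale N m u t ≠ 0 := (timeScale_pos (hpos t htI)).ne'
  have hleft : ∀ᶠ t' in 𝓝 t, tinv (τof N m u t') = t' :=
    eventually_of_mem (Ioo_mem_nhds ht.1 ht.2) fun t' ht' => htinv t' (Ioo_subset_Ico_self ht')
  have retime : ∀ {F : ℝ → ℝ} {F' : ℝ}, HasDerivAt F (timeScale N m u t * F') t →
      HasDerivAt (fun τ => F (tinv τ)) F' (τof N m u t) := fun hF =>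
    (hF.comp_localLeftInverse hτ hscale hleft).congr_deriv (mul_div_cancel_left₀ _ hscale)
  exact ⟨retime (hasDerivAt_sVal (hmid t htI) (hpos t htI).ne'), fun i hi1 hi2 _ =>
    retime (hasDerivAt_xVal (hode t htI i hi1 hi2) (hmid t htI) (hpos t htI).ne')⟩

/-- The directional compactification plus time-scale desingularization transforms solutions
of the discretized ODE system `u_i' = N²(u_{i-1} - 2u_i + u_{i+1}) + λ e^{u_i^m}` into
solutions of the desingularized vector field. -/
theorem stmt13 (N m : ℕ) (hN : 4 ≤ N) (hNe : Even N) (hm : 0 < m)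
    (lam : ℝ) (hlam : 0 < lam)
    (u : ℝ → ℕ → ℝ) (T : ℝ) (hT : 0 < T)
    (hbc : ∀ t, u t 0 = 0 ∧ u t N = 0)
    (hpos : ∀ t ∈ Set.Ico (0 : ℝ) T, 0 < u t (N / 2))
    (hode : ∀ t ∈ Set.Ico (0 : ℝ) T, ∀ i, 1 ≤ i → i ≤ N - 1 →
      HasDerivAt (fun t' => u t' i)
        ((N : ℝ) ^ 2 * (u t (i - 1) - 2 * u t i + u t (i + 1))
          + lam * Real.exp (u t i ^ m)) t)
    (tinv : ℝ → ℝ)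
    (htinv : ∀ t ∈ Set.Ico (0 : ℝ) T, tinv (τof N m u t) = t) :
    ∀ t ∈ Set.Ioo (0 : ℝ) T,
      HasDerivAt (fun τ => sVal N u (tinv τ))
        (-Real.exp (-1 / sVal N u t ^ m) * ΔVal N u t (N / 2) - lam * sVal N u t)
        (τof N m u t) ∧
      ∀ i, 1 ≤ i → i ≤ N - 1 → i ≠ N / 2 →
        HasDerivAt (fun τ => xVal N u (tinv τ) i)
          (-xVal N u t i * (sVal N u t)⁻¹ * Real.exp (-1 / sVal N u t ^ m)
              * ΔVal N u t (N / 2)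
            - lam * xVal N u t i
            + (sVal N u t)⁻¹ * Real.exp (-1 / sVal N u t ^ m) * ΔVal N u t i
            + lam * Real.exp (-(1 - xVal N u t i ^ m) / sVal N u t ^ m))
          (τof N m u t) :=
  stmt13_general N m hN lam u T hpos hode tinv htinv
end

section
/- Let f : ℝⁿ → ℝⁿ be C¹, x* an asymptotically stable equilibrium with basin containing a set Ω, and suppose a solution (s(τ), x(τ)) of the desingularized system stays in {s > 0} for all τ ≥ 0 and converges to an equilibrium p* = (0, x*) lying on the horizon {s = 0}. If additionally ∫₀^∞ s(τ)^{-1} e^{−1/s(τ)^m} dτ = t_max < ∞, then the corresponding original solution u(t) = x-part rescaled by 1/s exists exactly on [0, t_max) and satisfies |u_{N/2}(t)| = 1/s(t(τ)) → ∞ as t → t_max; i.e., the original solution blows up at the finite time t_max. -/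
open MeasureTheory

/-- If the desingularized trajectory stays in `{s > 0}`, converges to the horizon
(`s → 0`), and the total original time `t_max = ∫₀^∞ s(τ)⁻¹ e^{-1/s(τ)^m} dτ` is finite,
then the original solution exists exactly on `[0, t_max)` and `u_{N/2}(t) = 1/s → ∞`
as `t → t_max⁻`: it blows up at the finite time `t_max`. -/
theorem stmt15 (m : ℕ) (hm : 0 < m) (s : ℝ → ℝ)
    (hcont : Continuous s)
    (hpos : ∀ τ, 0 ≤ τ → 0 < s τ)
    (hlim : Filter.Tendsto s Filter.atTop (nhds 0))
    (hint : IntegrableOn (fun τ => (s τ)⁻¹ * Real.exp (-1 / s τ ^ m)) (Set.Ioi 0))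
    (tmax : ℝ)
    (htmax : tmax = ∫ τ in Set.Ioi 0, (s τ)⁻¹ * Real.exp (-1 / s τ ^ m))
    (τinv : ℝ → ℝ)
    (hτinv : ∀ τ, 0 ≤ τ →
      τinv (∫ σ in (0 : ℝ)..τ, (s σ)⁻¹ * Real.exp (-1 / s σ ^ m)) = τ) :
    (∀ t, 0 ≤ t → t < tmax →
        ∃ τ, 0 ≤ τ ∧ (∫ σ in (0 : ℝ)..τ, (s σ)⁻¹ * Real.exp (-1 / s σ ^ m)) = t) ∧
    Filter.Tendsto (fun t => (s (τinv t))⁻¹)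
      (nhdsWithin tmax (Set.Iio tmax)) Filter.atTop := by
  set g : ℝ → ℝ := fun σ => (s σ)⁻¹ * Real.exp (-1 / s σ ^ m) with hg
  set F : ℝ → ℝ := fun τ => ∫ σ in (0 : ℝ)..τ, g σ with hF
  have hgcOn : ContinuousOn g (Set.Ici 0) := by
    intro τ hτ
    have h1 : s τ ≠ 0 := (hpos τ hτ).ne'
    have : ContinuousAt g τ := by
      refine ContinuousAt.mul (hcont.continuousAt.inv₀ h1) ?_
      exact Real.continuous_exp.continuousAt.comp
        (ContinuousAt.div continuousAt_const (hcont.continuousAt.pow m)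
          (pow_ne_zero m h1))
    exact this.continuousWithinAt
  have hii : ∀ a b : ℝ, 0 ≤ a → 0 ≤ b → IntervalIntegrable g volume a b := by
    intro a b ha hb
    refine (hgcOn.mono ?_).intervalIntegrable
    intro x hx
    exact le_trans (le_min ha hb) hx.1
  have hF0 : F 0 = 0 := intervalIntegral.integral_same
  have hFmono : ∀ a b : ℝ, 0 ≤ a → a ≤ b → F a ≤ F b := by
    intro a b ha hab
    have hb : (0:ℝ) ≤ b := le_trans ha hab
    have h1 : F a + ∫ σ in a..b, g σ = F b :=
      intervalIntegral.integral_add_adjacent_intervals (hii 0 a le_rfl ha) (hii a b ha hb)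
    have h2 : (0:ℝ) ≤ ∫ σ in a..b, g σ := by
      refine intervalIntegral.integral_nonneg hab ?_
      intro u hu
      have hu0 : (0:ℝ) ≤ u := le_trans ha hu.1
      have := hpos u hu0
      positivity
    linarith
  have hFle : ∀ b : ℝ, 0 ≤ b → F b ≤ tmax := by
    intro b hb
    have h1 : F b = ∫ σ in Set.Ioc 0 b, g σ := intervalIntegral.integral_of_le hb
    rw [h1, htmax]
    refine setIntegral_mono_set hint ?_ ?_
    · filter_upwards [self_mem_ae_restrict measurableSet_Ioi] with x hx
      have := hpos x (le_of_lt hx)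
      positivity
    · exact Filter.Eventually.of_forall (fun x hx => hx.1)
  have hFlt : ∀ b : ℝ, 0 ≤ b → F b < tmax := by
    intro b hb
    have hstep : F b < F (b + 1) := by
      have h1 : F b + ∫ σ in b..(b+1), g σ = F (b + 1) :=
        intervalIntegral.integral_add_adjacent_intervals (hii 0 b le_rfl hb)
          (hii b (b+1) hb (by linarith))
      have h2 : (0:ℝ) < ∫ σ in b..(b+1), g σ := by
        refine intervalIntegral.intervalIntegral_pos_of_pos_on
          (hii b (b+1) hb (by linarith)) ?_ (by linarith)
        intro u hu
        have hu0 : (0:ℝ) ≤ u := le_trans hb hu.1.le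
        have := hpos u hu0
        positivity
      linarith
    exact lt_of_lt_of_le hstep (hFle (b+1) (by linarith))
  have hFtend : Filter.Tendsto F Filter.atTop (nhds tmax) := by
    rw [htmax]
    exact MeasureTheory.intervalIntegral_tendsto_integral_Ioi 0 hint Filter.tendsto_id
  have key : ∀ t, 0 ≤ t → t < tmax → ∃ τ, 0 ≤ τ ∧ F τ = t := by
    intro t ht htlt
    obtain ⟨τ₀, hτ₀F, hτ₀0⟩ :=
      ((hFtend.eventually (eventually_gt_nhds htlt)).and
        (Filter.eventually_ge_atTop 0)).exists
    have hcF : ContinuousOn F (Set.Icc 0 τ₀) := by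
      have := intervalIntegral.continuousOn_primitive_interval
        (f := g) (a := (0:ℝ)) (b := τ₀) (μ := volume)
        ((hgcOn.mono (by
          rw [Set.uIcc_of_le hτ₀0]
          exact fun x hx => hx.1)).integrableOn_compact isCompact_uIcc)
      rwa [Set.uIcc_of_le hτ₀0] at this
    have ht' : t ∈ Set.Icc (F 0) (F τ₀) := ⟨by rw [hF0]; exact ht, hτ₀F.le⟩
    obtain ⟨τ, hτmem, hτeq⟩ := intermediate_value_Icc hτ₀0 hcF ht'
    exact ⟨τ, hτmem.1, hτeq⟩
  refine ⟨key, ?_⟩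
  rw [Filter.tendsto_atTop]
  intro M
  set c : ℝ := max M 1 with hc
  have hc0 : (0:ℝ) < c := lt_of_lt_of_le one_pos (le_max_right _ _)
  have hcinv : (0:ℝ) < c⁻¹ := by positivity
  obtain ⟨A, hA⟩ := Filter.eventually_atTop.1
    ((hlim.eventually (eventually_lt_nhds hcinv)).and (Filter.eventually_ge_atTop 0))
  set A' : ℝ := max A 0 with hA'
  have hA'0 : (0:ℝ) ≤ A' := le_max_right _ _
  filter_upwards [Ioo_mem_nhdsLT_of_mem (Set.mem_Ioc.2 ⟨hFlt A' hA'0, le_rfl⟩)]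
    with t ht
  obtain ⟨ht1, ht2⟩ := ht
  have hFA' : 0 ≤ F A' := by rw [← hF0]; exact hFmono 0 A' le_rfl hA'0
  have ht0 : 0 ≤ t := le_trans hFA' ht1.le
  obtain ⟨τ, hτ0, hτeq⟩ := key t ht0 ht2
  have hτinvt : τinv t = τ := by rw [← hτeq]; exact hτinv τ hτ0
  have hτA : A' < τ := by
    by_contra h
    push_neg at h
    exact absurd (hFmono τ A' hτ0 h) (by rw [hτeq]; exact not_le.2 ht1)
  have hsτ : s τ < c⁻¹ := (hA τ (le_trans (le_max_left _ _) hτA.le)).1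
  have hspos : 0 < s τ := hpos τ hτ0
  have : c < (s τ)⁻¹ := by
    have := (inv_strictAnti₀ hspos hsτ)
    rwa [inv_inv] at this
  rw [hτinvt]
  exact le_of_lt (lt_of_le_of_lt (le_max_left M 1) this)
end
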